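/- Let n ≥ 1 and c < d. There exists λ₀ > 0 such that for every λ ∈ (0, λ₀) and every s ∈ [c,d] there is a strictly contractive invertible affine map f: ℝⁿ → ℝⁿ satisfying f(t, t², …, tⁿ) = (u, u², …, uⁿ) with u = λ(t − c) + s, for all t ∈ ℝ. In other words, the moment curve in ℝⁿ is invariant under affine maps realizing each orientation-preserving similarity t ↦ λ(t − c) + s of the parameter line, and these affine maps are contractions for λ small enough. -/

import Mathlib

open Set

/-- `f : ℝⁿ → ℝⁿ` is an invertible, strictly contractive affine map
(its linear part is bijective and has operator norm `< 1`). -/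
def IsAffineContraction {n : ℕ}
    (f : EuclideanSpace ℝ (Fin n) → EuclideanSpace ℝ (Fin n)) : Prop :=
  ∃ (T : EuclideanSpace ℝ (Fin n) →L[ℝ] EuclideanSpace ℝ (Fin n))
    (b : EuclideanSpace ℝ (Fin n)),
    Function.Bijective T ∧ ‖T‖ < 1 ∧ ∀ x, f x = T x + b

/-- `E ⊆ ℝⁿ` is self-affine: it is nonempty, compact and is the attractor of an
affine iterated function system. -/
def IsSelfAffine {n : ℕ} (E : Set (EuclideanSpace ℝ (Fin n))) : Prop :=
  E.Nonempty ∧ IsCompact E ∧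
    ∃ (ℓ : ℕ) (f : Fin ℓ → (EuclideanSpace ℝ (Fin n) → EuclideanSpace ℝ (Fin n))),
      (∀ i, IsAffineContraction (f i)) ∧ E = ⋃ i, f i '' E

/-- The moment curve `t ↦ (t, t², …, tⁿ)` in ℝⁿ. -/
def momentCurve (n : ℕ) (t : ℝ) : EuclideanSpace ℝ (Fin n) :=
  WithLp.toLp 2 (fun i : Fin n => t ^ ((i : ℕ) + 1))

/-!
Expanding `(lam * t + a) ^ (k + 1)` binomially shows that `t ↦ lam * t + a` acts on the moment
curve `γ` through an affine map: `γ (lam * t + a) = P_a (D_lam (γ t)) + γ a`, where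
`D_lam = diag (lam, lam², …, lamⁿ)` and `P_a` is the lower unitriangular matrix of binomial
coefficients times powers of `a`. Both are invertible, and `‖P_a D_lam‖ ≤ ‖P_a‖ lam`. For
`s ∈ [c, d]` and `lam ∈ [0, 1]` the shift `a = s - lam * c` stays in a compact set, on which
`‖P_a‖` is bounded, so small `lam` give contractions.
-/

open Matrix

lemma Matrix.continuous_toEuclideanCLM {𝕜 ι : Type*} [RCLike 𝕜] [Fintype ι]
    [DecidableEq ι] : Continuous (toEuclideanCLM (n := ι) (𝕜 := 𝕜)) :=
  LinearMap.continuous_of_finiteDimensional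
    (toEuclideanCLM (n := ι) (𝕜 := 𝕜)).toAlgEquiv.toLinearMap

namespace MomentCurve

variable {n : ℕ}

-- `(k + 1).choose (j + 1)` vanishes above the diagonal, where `k - j` is truncated.
def shiftMatrix (n : ℕ) (a : ℝ) : Matrix (Fin n) (Fin n) ℝ :=
  of fun k j => ((k + 1 : ℕ).choose (j + 1) : ℝ) * a ^ ((k : ℕ) - j)

def scaleMatrix (n : ℕ) (lam : ℝ) : Matrix (Fin n) (Fin n) ℝ :=
  diagonal fun k => lam ^ ((k : ℕ) + 1)

lemma sum_choose_succ_mul_pow_add_pow {R : Type*} [CommSemiring R] (t a : R) (k : ℕ) :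
    ∑ j ∈ Finset.range (k + 1), ((k + 1).choose (j + 1) : R) * a ^ (k - j) * t ^ (j + 1)
      + a ^ (k + 1) = (t + a) ^ (k + 1) := by
  rw [add_pow, Finset.sum_range_succ' _ (k + 1)]
  simp only [Nat.add_sub_add_right, pow_zero, one_mul, Nat.choose_zero_right, Nat.cast_one,
    mul_one, Nat.sub_zero]
  exact congrArg (· + _) (Finset.sum_congr rfl fun j _ => by ring)

lemma toEuclideanCLM_shiftMatrix_momentCurve (a t : ℝ) :
    toEuclideanCLM (𝕜 := ℝ) (shiftMatrix n a) (momentCurve n t) + momentCurve n a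
      = momentCurve n (t + a) := by
  ext k
  simp only [PiLp.add_apply, momentCurve, ofLp_toEuclideanCLM, mulVec, dotProduct, shiftMatrix,
    of_apply]
  rw [← sum_choose_succ_mul_pow_add_pow,
    Fin.sum_univ_eq_sum_range (fun j => ((k + 1 : ℕ).choose (j + 1) : ℝ) * a ^ ((k : ℕ) - j)
      * t ^ (j + 1)) n]
  congr 1
  refine (Finset.sum_subset (Finset.range_subset_range.2 k.isLt) fun j _ hj => ?_).symm
  rw [Nat.choose_eq_zero_of_lt (by simp at hj; omega), Nat.cast_zero, zero_mul, zero_mul]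

lemma toEuclideanCLM_scaleMatrix_momentCurve (lam t : ℝ) :
    toEuclideanCLM (𝕜 := ℝ) (scaleMatrix n lam) (momentCurve n t)
      = momentCurve n (lam * t) := by
  ext k
  simp [momentCurve, scaleMatrix, mulVec_diagonal, mul_pow]

lemma isUnit_shiftMatrix (a : ℝ) : IsUnit (shiftMatrix n a) := by
  have hlower : (shiftMatrix n a).BlockTriangular OrderDual.toDual := fun k j hkj => by
    rw [shiftMatrix, of_apply, Nat.choose_eq_zero_of_lt (by simpa using hkj), Nat.cast_zero,
      zero_mul]
  rw [isUnit_iff_isUnit_det, det_of_isLowerTriangular _ hlower]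
  simp [shiftMatrix]

lemma isUnit_scaleMatrix {lam : ℝ} (hlam : lam ≠ 0) : IsUnit (scaleMatrix n lam) :=
  isUnit_diagonal.2 <| Pi.isUnit_iff.2 fun _ => (isUnit_iff_ne_zero.2 hlam).pow _

open scoped Matrix.Norms.L2Operator in
lemma norm_toEuclideanCLM_scaleMatrix_le {lam : ℝ} (h0 : 0 ≤ lam) (h1 : lam ≤ 1) :
    ‖toEuclideanCLM (𝕜 := ℝ) (scaleMatrix n lam)‖ ≤ lam := by
  rw [l2_opNorm_toEuclideanCLM, scaleMatrix, l2_opNorm_diagonal]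
  refine (pi_norm_le_iff_of_nonneg h0).2 fun k => ?_
  rw [Real.norm_of_nonneg (by positivity)]
  exact pow_le_of_le_one h0 h1 (by omega)

lemma continuous_shiftMatrix : Continuous (shiftMatrix n) := by
  unfold shiftMatrix
  fun_prop

noncomputable def affineLift (n : ℕ) (lam a : ℝ) (x : EuclideanSpace ℝ (Fin n)) :
    EuclideanSpace ℝ (Fin n) :=
  toEuclideanCLM (𝕜 := ℝ) (shiftMatrix n a * scaleMatrix n lam) x + momentCurve n a

lemma affineLift_momentCurve (lam a t : ℝ) :
    affineLift n lam a (momentCurve n t) = momentCurve n (lam * t + a) := by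
  rw [affineLift, map_mul, mul_apply_eq_comp, toEuclideanCLM_scaleMatrix_momentCurve,
    toEuclideanCLM_shiftMatrix_momentCurve]

lemma isAffineContraction_affineLift {lam a : ℝ} (h0 : 0 < lam) (h1 : lam ≤ 1)
    (h : ‖toEuclideanCLM (𝕜 := ℝ) (shiftMatrix n a)‖ * lam < 1) :
    IsAffineContraction (affineLift n lam a) := by
  refine ⟨_, _, ?_, ?_, fun x => rfl⟩
  · exact ContinuousLinearMap.isUnit_iff_bijective.1 <|
      ((isUnit_shiftMatrix a).mul (isUnit_scaleMatrix h0.ne')).map _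
  · rw [map_mul]
    calc _ ≤ _ := norm_mul_le _ _
      _ ≤ _ := by gcongr; exact norm_toEuclideanCLM_scaleMatrix_le h0.le h1
      _ < 1 := h

end MomentCurve

open MomentCurve in
theorem momentCurve_invariant_under_contractions_general
    (n : ℕ) (c d : ℝ) :
    ∃ lam₀ : ℝ, 0 < lam₀ ∧ ∀ lam ∈ Ioo 0 lam₀, ∀ s ∈ Icc c d,
      ∃ f : EuclideanSpace ℝ (Fin n) → EuclideanSpace ℝ (Fin n),
        IsAffineContraction f ∧
        ∀ t : ℝ, f (momentCurve n t) = momentCurve n (lam * (t - c) + s) := by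
  have hcompact : IsCompact (Icc c d ×ˢ Icc (0 : ℝ) 1) := isCompact_Icc.prod isCompact_Icc
  have hcont : Continuous fun p : ℝ × ℝ =>
      toEuclideanCLM (𝕜 := ℝ) (shiftMatrix n (p.1 - p.2 * c)) :=
    (continuous_toEuclideanCLM.comp continuous_shiftMatrix).comp
      (continuous_fst.sub (continuous_snd.mul continuous_const))
  obtain ⟨C, hC⟩ := hcompact.exists_bound_of_continuousOn hcont.continuousOn
  refine ⟨1 / (|C| + 1), by positivity, fun lam ⟨h0, hlt⟩ s hs => ?_⟩
  have hlam : lam * (|C| + 1) < 1 := (lt_div_iff₀ (by positivity)).1 hlt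
  have hlam1 : lam ≤ 1 := by nlinarith [abs_nonneg C]
  have hshift : ‖toEuclideanCLM (𝕜 := ℝ) (shiftMatrix n (s - lam * c))‖ ≤ |C| :=
    (hC (s, lam) ⟨hs, h0.le, hlam1⟩).trans (le_abs_self C)
  refine ⟨affineLift n lam (s - lam * c),
    isAffineContraction_affineLift h0 hlam1 (by nlinarith), fun t => ?_⟩
  rw [affineLift_momentCurve]
  ring_nf

/-- Let `n ≥ 1` and `c < d`.  There exists `λ₀ > 0` such that for
every `λ ∈ (0, λ₀)` and every `s ∈ [c,d]` there is a strictly contractive invertible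
affine map `f : ℝⁿ → ℝⁿ` satisfying `f (t, t², …, tⁿ) = (u, u², …, uⁿ)` with
`u = λ (t − c) + s`, for all `t ∈ ℝ`. -/
theorem momentCurve_invariant_under_contractions
    (n : ℕ) (hn : 1 ≤ n) (c d : ℝ) (hcd : c < d) :
    ∃ lam₀ : ℝ, 0 < lam₀ ∧ ∀ lam ∈ Ioo 0 lam₀, ∀ s ∈ Icc c d,
      ∃ f : EuclideanSpace ℝ (Fin n) → EuclideanSpace ℝ (Fin n),
        IsAffineContraction f ∧
        ∀ t : ℝ, f (momentCurve n t) = momentCurve n (lam * (t - c) + s) :=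
  momentCurve_invariant_under_contractions_general n c d
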